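/- arXiv:2012.12071 — 3 statements merged into one kernel-verified Lean document; each statement's English description precedes it below -/
import Mathlib

section
/- Let L be a positive integer and let V be a 2L×2L complex unitary matrix whose columns come in conjugate pairs: for each l ∈ {1,…,L}, column 2l of V is the entrywise complex conjugate of column 2l−1 of V. Let U be the 2L×2L block-diagonal complex matrix whose l-th 2×2 diagonal block is (1/√2)·[[1, i], [1, −i]]. Then every entry of the product V U is real, and there exists a real orthogonal 2L×2L matrix W such that the image of W under the embedding ℝ ⊆ ℂ equals V U. -/
open Matrix Complex

/-- The 2×2 block `(1/√2)·[[1, i], [1, −i]]`. -/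
noncomputable def Ublock : Matrix (Fin 2) (Fin 2) ℂ :=
  ((1 : ℂ) / Real.sqrt 2) • !![1, Complex.I; 1, -Complex.I]

/-- The 2L×2L block-diagonal complex matrix whose every 2×2 diagonal block is `Ublock`. -/
noncomputable def Umat (L : ℕ) : Matrix (Fin L × Fin 2) (Fin L × Fin 2) ℂ :=
  fun p q => if p.1 = q.1 then Ublock p.2 q.2 else 0

lemma UblockU : Ublockᴴ * Ublock = 1 := by
  have h2 : ((Real.sqrt 2 : ℝ) : ℂ) * ((Real.sqrt 2 : ℝ) : ℂ) = 2 := by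
    rw [← Complex.ofReal_mul, Real.mul_self_sqrt (by norm_num)]
    norm_num
  ext j k
  fin_cases j <;> fin_cases k <;>
    simp [Ublock, Matrix.mul_apply, Fin.sum_univ_two, Matrix.one_apply,
      div_mul_div_comm, h2]
  all_goals first
    | (rw [← mul_inv, h2]; norm_num)
    | (rw [show ∀ a : ℂ, a⁻¹ * I * (a⁻¹ * I) = a⁻¹ * a⁻¹ * (I * I) from fun a => by ring,
        ← mul_inv, h2, Complex.I_mul_I]; norm_num)

lemma Umat_eq (L : ℕ) : Umat L =
    (Matrix.blockDiagonal fun _ : Fin L => Ublock).submatrix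
      (Equiv.prodComm (Fin L) (Fin 2)) (Equiv.prodComm (Fin L) (Fin 2)) := by
  ext ⟨l, j⟩ ⟨m, k⟩
  simp [Umat, Matrix.blockDiagonal_apply, eq_comm]

lemma UmatU (L : ℕ) : (Umat L)ᴴ * Umat L = 1 := by
  rw [Umat_eq, Matrix.conjTranspose_submatrix, Matrix.submatrix_mul_equiv,
    Matrix.blockDiagonal_conjTranspose, ← Matrix.blockDiagonal_mul]
  simp [UblockU]
  ext ⟨l, j⟩ ⟨m, k⟩
  simp [Matrix.one_apply, Matrix.blockDiagonal_apply, Prod.ext_iff, and_comm]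
  split <;> simp_all

lemma mul_Umat_apply (L : ℕ) (V : Matrix (Fin L × Fin 2) (Fin L × Fin 2) ℂ)
    (i : Fin L × Fin 2) (l : Fin L) (k : Fin 2) :
    (V * Umat L) i (l, k) = V i (l, 0) * Ublock 0 k + V i (l, 1) * Ublock 1 k := by
  rw [Matrix.mul_apply, Fintype.sum_prod_type]
  simp [Umat, Fin.sum_univ_two, Finset.sum_ite_eq']

theorem stmt_9 (L : ℕ) (hL : 0 < L) (V : Matrix (Fin L × Fin 2) (Fin L × Fin 2) ℂ)
    (hV : Vᴴ * V = 1)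
    (hconj : ∀ (i : Fin L × Fin 2) (l : Fin L), V i (l, 1) = starRingEnd ℂ (V i (l, 0))) :
    (∀ i j, ((V * Umat L) i j).im = 0) ∧
      ∃ W : Matrix (Fin L × Fin 2) (Fin L × Fin 2) ℝ,
        Wᵀ * W = 1 ∧ W.map (Complex.ofReal ·) = V * Umat L := by
  set M := V * Umat L with hM
  have him : ∀ i j, (M i j).im = 0 := by
    intro i ⟨l, k⟩
    rw [hM, mul_Umat_apply, hconj i l]
    fin_cases k <;>
      simp [Ublock, Complex.add_im, Complex.mul_im, Complex.div_re, Complex.div_im]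
  refine ⟨him, ?_⟩
  set W : Matrix (Fin L × Fin 2) (Fin L × Fin 2) ℝ := fun i j => (M i j).re with hW
  have hmap : W.map (Complex.ofReal ·) = M := by
    ext i j
    exact Complex.ext rfl (by simpa using (him i j).symm)
  have hMM : Mᴴ * M = 1 := by
    rw [hM, Matrix.conjTranspose_mul, Matrix.mul_assoc, ← Matrix.mul_assoc Vᴴ, hV,
      Matrix.one_mul, UmatU]
  have hMT : Mᴴ = Mᵀ := by
    ext i j
    simp only [Matrix.conjTranspose_apply, Matrix.transpose_apply]
    exact Complex.conj_eq_iff_im.mpr (him j i)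
  refine ⟨W, ?_, hmap⟩
  have hinj : Function.Injective (Complex.ofRealHom : ℝ →+* ℂ) := Complex.ofReal_injective
  apply Matrix.map_injective hinj
  have h1 : (Wᵀ * W).map (Complex.ofRealHom : ℝ →+* ℂ) =
      (W.map Complex.ofRealHom)ᵀ * W.map Complex.ofRealHom := by
    rw [Matrix.map_mul, Matrix.transpose_map]
  show (Wᵀ * W).map (Complex.ofRealHom : ℝ →+* ℂ) = (1 : Matrix _ _ ℝ).map Complex.ofRealHom
  rw [h1]
  have hmap' : W.map (Complex.ofRealHom : ℝ →+* ℂ) = M := hmap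
  rw [hmap', ← hMT, hMM, Matrix.map_one _ (map_zero _) (map_one _)]
end

section
/- Let n, D, L, K be positive integers with 2L ≤ D, let ω_1, …, ω_L ∈ ℝ^n, σ > 0, and let W be a real D×2L matrix with WᵀW = 1, Φ a real D×K matrix, α ∈ ℝ^K, I ∈ ℝ^D. For s ∈ ℝ^n let R(s) be the 2L×2L block-diagonal matrix whose l-th 2×2 block is [[cos(ω_l·s), −sin(ω_l·s)], [sin(ω_l·s), cos(ω_l·s)]]. For each l let (η_{l1}, η_{l2}) ∈ ℝ², write u = Wᵀ Φ α ∈ ℝ^{2L} and v = Wᵀ I ∈ ℝ^{2L} with 2-dimensional blocks u_l, v_l, and define η̂_{l1} = η_{l1} + (1/σ²)(u_{l1} v_{l1} + u_{l2} v_{l2}) and η̂_{l2} = η_{l2} + (1/σ²)(u_{l1} v_{l2} − u_{l2} v_{l1}). Then ∫_{[0,2π]^n} exp(−‖I − W R(s) Wᵀ Φ α‖₂² / (2σ²)) · exp(∑_l [η_{l1} cos(ω_l·s) + η_{l2} sin(ω_l·s)]) ds = exp(−(‖Wᵀ Φ α‖₂² + ‖I‖₂²)/(2σ²)) · ∫_{[0,2π]^n}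 exp(∑_l [η̂_{l1} cos(ω_l·s) + η̂_{l2} sin(ω_l·s)]) ds, where both integrals are with respect to Lebesgue measure on [0,2π]^n. -/
open Matrix Real MeasureTheory

/-- The 2×2 rotation matrix of angle `θ`. -/
noncomputable def rotBlock (θ : ℝ) : Matrix (Fin 2) (Fin 2) ℝ :=
  !![Real.cos θ, -Real.sin θ; Real.sin θ, Real.cos θ]

/-- The 2L×2L block-diagonal matrix whose l-th 2×2 diagonal block is the
rotation matrix of angle `ω l · s`. -/
noncomputable def blockRot {n L : ℕ} (ω : Fin L → Fin n → ℝ) (s : Fin n → ℝ) :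
    Matrix (Fin L × Fin 2) (Fin L × Fin 2) ℝ :=
  fun p q => if p.1 = q.1 then rotBlock (∑ i, ω p.1 i * s i) p.2 q.2 else 0

lemma blockRot_mulVec0 {n L : ℕ} (ω : Fin L → Fin n → ℝ) (s : Fin n → ℝ)
    (u : Fin L × Fin 2 → ℝ) (l : Fin L) :
    (blockRot ω s).mulVec u (l, 0) =
      Real.cos (∑ i, ω l i * s i) * u (l, 0) - Real.sin (∑ i, ω l i * s i) * u (l, 1) := by
  simp [Matrix.mulVec, dotProduct, blockRot, rotBlock, Fintype.sum_prod_type,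
    Fin.sum_univ_two, ite_mul, Finset.sum_ite_eq, Finset.sum_add_distrib]
  ring

lemma blockRot_mulVec1 {n L : ℕ} (ω : Fin L → Fin n → ℝ) (s : Fin n → ℝ)
    (u : Fin L × Fin 2 → ℝ) (l : Fin L) :
    (blockRot ω s).mulVec u (l, 1) =
      Real.sin (∑ i, ω l i * s i) * u (l, 0) + Real.cos (∑ i, ω l i * s i) * u (l, 1) := by
  simp [Matrix.mulVec, dotProduct, blockRot, rotBlock, Fintype.sum_prod_type,
    Fin.sum_univ_two, ite_mul, Finset.sum_ite_eq, Finset.sum_add_distrib]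

theorem stmt_12 (n D L K : ℕ) (hn : 0 < n) (hD : 0 < D) (hL : 0 < L) (hK : 0 < K)
    (hDL : 2 * L ≤ D)
    (ω : Fin L → Fin n → ℝ) (σ : ℝ) (hσ : 0 < σ)
    (W : Matrix (Fin D) (Fin L × Fin 2) ℝ) (hW : Wᵀ * W = 1)
    (Φ : Matrix (Fin D) (Fin K) ℝ) (α : Fin K → ℝ) (I : Fin D → ℝ)
    (η : Fin L → Fin 2 → ℝ)
    (u v : Fin L × Fin 2 → ℝ)
    (hu : u = (Wᵀ * Φ).mulVec α) (hv : v = Wᵀ.mulVec I)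
    (ηhat : Fin L → Fin 2 → ℝ)
    (hηhat0 : ∀ l, ηhat l 0 = η l 0 + (1 / σ ^ 2) * (u (l, 0) * v (l, 0) + u (l, 1) * v (l, 1)))
    (hηhat1 : ∀ l, ηhat l 1 = η l 1 + (1 / σ ^ 2) * (u (l, 0) * v (l, 1) - u (l, 1) * v (l, 0))) :
    ∫ s in (Set.univ.pi fun _ : Fin n => Set.Icc (0 : ℝ) (2 * Real.pi)),
        Real.exp (-(∑ i, (I i - (W * blockRot ω s * Wᵀ * Φ).mulVec α i) ^ 2) / (2 * σ ^ 2)) *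
          Real.exp (∑ l, (η l 0 * Real.cos (∑ i, ω l i * s i) +
            η l 1 * Real.sin (∑ i, ω l i * s i))) =
      Real.exp (-((∑ j, u j ^ 2) + ∑ i, I i ^ 2) / (2 * σ ^ 2)) *
        ∫ s in (Set.univ.pi fun _ : Fin n => Set.Icc (0 : ℝ) (2 * Real.pi)),
          Real.exp (∑ l, (ηhat l 0 * Real.cos (∑ i, ω l i * s i) +
            ηhat l 1 * Real.sin (∑ i, ω l i * s i))) := by
  have hσ2 : σ ^ 2 ≠ 0 := pow_ne_zero _ hσ.ne'
  -- pointwise identity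
  have key : ∀ s : Fin n → ℝ,
      Real.exp (-(∑ i, (I i - (W * blockRot ω s * Wᵀ * Φ).mulVec α i) ^ 2) / (2 * σ ^ 2)) *
          Real.exp (∑ l, (η l 0 * Real.cos (∑ i, ω l i * s i) +
            η l 1 * Real.sin (∑ i, ω l i * s i))) =
      Real.exp (-((∑ j, u j ^ 2) + ∑ i, I i ^ 2) / (2 * σ ^ 2)) *
        Real.exp (∑ l, (ηhat l 0 * Real.cos (∑ i, ω l i * s i) +
            ηhat l 1 * Real.sin (∑ i, ω l i * s i))) := by
    intro s
    set w : Fin L × Fin 2 → ℝ := (blockRot ω s).mulVec u with hwdef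
    have hx : (W * blockRot ω s * Wᵀ * Φ).mulVec α = W.mulVec w := by
      rw [hwdef, hu, Matrix.mulVec_mulVec, Matrix.mulVec_mulVec, Matrix.mul_assoc]
    -- dot products
    have hIx : ∑ i, I i * W.mulVec w i = ∑ j, v j * w j := by
      have : I ⬝ᵥ W.mulVec w = Wᵀ.mulVec I ⬝ᵥ w := by
        rw [Matrix.dotProduct_mulVec, ← Matrix.mulVec_transpose]
      simpa [dotProduct, hv] using this
    have hxx : ∑ i, W.mulVec w i ^ 2 = ∑ j, w j ^ 2 := by
      have : W.mulVec w ⬝ᵥ W.mulVec w = w ⬝ᵥ w := by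
        rw [Matrix.dotProduct_mulVec, ← Matrix.mulVec_transpose, Matrix.mulVec_mulVec, hW,
          Matrix.one_mulVec]
      simpa [dotProduct, sq] using this
    have hww : ∑ j, w j ^ 2 = ∑ j, u j ^ 2 := by
      rw [Fintype.sum_prod_type, Fintype.sum_prod_type]
      refine Finset.sum_congr rfl fun l _ => ?_
      rw [Fin.sum_univ_two, Fin.sum_univ_two, hwdef, blockRot_mulVec0, blockRot_mulVec1]
      nlinarith [Real.sin_sq_add_cos_sq (∑ i, ω l i * s i)]
    have hvw : ∑ j, v j * w j = ∑ l,
        (Real.cos (∑ i, ω l i * s i) * (u (l,0) * v (l,0) + u (l,1) * v (l,1)) +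
         Real.sin (∑ i, ω l i * s i) * (u (l,0) * v (l,1) - u (l,1) * v (l,0))) := by
      rw [Fintype.sum_prod_type]
      refine Finset.sum_congr rfl fun l _ => ?_
      rw [Fin.sum_univ_two, hwdef, blockRot_mulVec0, blockRot_mulVec1]
      ring
    have hnorm : ∑ i, (I i - W.mulVec w i) ^ 2 =
        (∑ j, u j ^ 2) + (∑ i, I i ^ 2) - 2 * ∑ l,
          (Real.cos (∑ i, ω l i * s i) * (u (l,0) * v (l,0) + u (l,1) * v (l,1)) +
           Real.sin (∑ i, ω l i * s i) * (u (l,0) * v (l,1) - u (l,1) * v (l,0))) := by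
      have expand : ∀ i, (I i - W.mulVec w i) ^ 2 =
          I i ^ 2 - 2 * (I i * W.mulVec w i) + W.mulVec w i ^ 2 := fun i => by ring
      rw [← hvw, ← hww, ← hxx, ← hIx]
      simp only [expand, Finset.sum_add_distrib, Finset.sum_sub_distrib, ← Finset.mul_sum]
      ring
    have hhat : ∑ l, (ηhat l 0 * Real.cos (∑ i, ω l i * s i) +
          ηhat l 1 * Real.sin (∑ i, ω l i * s i)) =
        (∑ l, (η l 0 * Real.cos (∑ i, ω l i * s i) + η l 1 * Real.sin (∑ i, ω l i * s i))) +
        (1 / σ ^ 2) * ∑ l,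
          (Real.cos (∑ i, ω l i * s i) * (u (l,0) * v (l,0) + u (l,1) * v (l,1)) +
           Real.sin (∑ i, ω l i * s i) * (u (l,0) * v (l,1) - u (l,1) * v (l,0))) := by
      rw [Finset.mul_sum, ← Finset.sum_add_distrib]
      refine Finset.sum_congr rfl fun l _ => ?_
      rw [hηhat0 l, hηhat1 l]
      ring
    rw [hx, hnorm, ← Real.exp_add, ← Real.exp_add, hhat]
    congr 1
    field_simp
    ring
  calc ∫ s in (Set.univ.pi fun _ : Fin n => Set.Icc (0 : ℝ) (2 * Real.pi)),
        Real.exp (-(∑ i, (I i - (W * blockRot ω s * Wᵀ * Φ).mulVec α i) ^ 2) / (2 * σ ^ 2)) *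
          Real.exp (∑ l, (η l 0 * Real.cos (∑ i, ω l i * s i) +
            η l 1 * Real.sin (∑ i, ω l i * s i)))
      = ∫ s in (Set.univ.pi fun _ : Fin n => Set.Icc (0 : ℝ) (2 * Real.pi)),
          Real.exp (-((∑ j, u j ^ 2) + ∑ i, I i ^ 2) / (2 * σ ^ 2)) *
            Real.exp (∑ l, (ηhat l 0 * Real.cos (∑ i, ω l i * s i) +
              ηhat l 1 * Real.sin (∑ i, ω l i * s i))) := by
        exact integral_congr_ae (Filter.Eventually.of_forall fun s => key s)
    _ = _ := MeasureTheory.integral_const_mul _ _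
end

section
/- Let n, D, L, K be positive integers with 2L ≤ D, let ω_1, …, ω_L ∈ ℝ^n, σ > 0, W a real D×2L matrix with WᵀW = 1, Φ a real D×K matrix, I ∈ ℝ^D, and T(s) = W R(s) Wᵀ where R(s) is the 2L×2L block-diagonal rotation matrix with blocks of angles ω_l·s. Let π : [0,2π]^n → ℝ be a continuous, strictly positive prior density. Define f : ℝ^K → ℝ by f(α) = −log ∫_{[0,2π]^n} exp(−‖I − T(s)Φα‖₂²/(2σ²)) π(s) ds, let h(s,α) = −(1/σ²) Φᵀ T(s)ᵀ (I − T(s)Φα) ∈ ℝ^K, and let p_α(s) be the posterior density proportional to exp(−‖I − T(s)Φα‖₂²/(2σ²)) π(s) on [0,2π]^n. Then f is twice differentiable, and its Hessian matrix at every α ∈ ℝ^K equals (1/σ²) Φᵀ W Wᵀ Φ − Cov_{s∼p_α}(h(s,α)), where Cov_{s∼p_α}(h) = ∫ p_α(s) h(s,α) h(s,α)ᵀ ds − (∫ p_α(s) h(s,α) ds)(∫ p_α(s) h(s,α) ds)ᵀ. -/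
open Matrix Real MeasureTheory

/-!
Because `T(s)ᵀ T(s) = W Wᵀ` does not depend on `s`, the exponent `-‖I - T(s)Φα‖² / (2σ²)` splits as
`-c₀ - ½ αᵀAα + b(s) ⬝ α` with `A = ΦᵀWWᵀΦ / σ²` and `b(s) = ΦᵀT(s)ᵀI / σ²`, so that
`f(α) = c₀ + ½ αᵀAα - log G(α)` with `G(α) = ∫ exp(b(s) ⬝ α) π(s) ds`. As `b` and `π` are bounded
on the compact box, `G` may be differentiated under the integral sign, and the Hessian of `log G`
is the covariance of `b` under the posterior `p_α`. Since `h(s, α) = Aα - b(s)` differs from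
`-b(s)` by a constant, that is also the covariance of `h`.
-/

open scoped ENNReal

lemma rotBlock_transpose_mul_self (θ : ℝ) : (rotBlock θ)ᵀ * rotBlock θ = 1 := by
  ext a c
  fin_cases a <;> fin_cases c <;>
    simp [rotBlock, Matrix.mul_apply, Fin.sum_univ_two, ← sq] <;> ring

lemma blockRot_eq_submatrix_blockDiagonal {n L : ℕ} (ω : Fin L → Fin n → ℝ) (s : Fin n → ℝ) :
    blockRot ω s = (blockDiagonal fun l => rotBlock (∑ i, ω l i * s i)).submatrix
      (Equiv.prodComm _ _) (Equiv.prodComm _ _) := by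
  ext ⟨l, a⟩ ⟨l', c⟩
  simp only [blockRot, submatrix_apply, Equiv.prodComm_apply, Prod.swap_prod_mk,
    blockDiagonal_apply]

lemma blockRot_transpose_mul_self {n L : ℕ} (ω : Fin L → Fin n → ℝ) (s : Fin n → ℝ) :
    (blockRot ω s)ᵀ * blockRot ω s = 1 := by
  rw [blockRot_eq_submatrix_blockDiagonal, transpose_submatrix, submatrix_mul_equiv,
    blockDiagonal_transpose, ← blockDiagonal_mul]
  simp_rw [rotBlock_transpose_mul_self, ← Pi.one_def, blockDiagonal_one]
  exact submatrix_one_equiv _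

lemma continuous_blockRot {n L : ℕ} (ω : Fin L → Fin n → ℝ) : Continuous (blockRot ω) := by
  refine continuous_pi fun ⟨l, a⟩ => continuous_pi fun ⟨l', c⟩ => ?_
  unfold blockRot rotBlock
  split_ifs
  · fin_cases a <;> fin_cases c <;> simp <;> fun_prop
  · exact continuous_const

lemma transpose_mul_self_mul_mul_transpose {m k R : Type*} [Fintype m] [Fintype k] [DecidableEq k]
    [CommRing R] {W : Matrix m k R} {Q : Matrix k k R} (hW : Wᵀ * W = 1) (hQ : Qᵀ * Q = 1) :
    (W * Q * Wᵀ)ᵀ * (W * Q * Wᵀ) = W * Wᵀ := by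
  simp only [transpose_mul, transpose_transpose, Matrix.mul_assoc]
  rw [← Matrix.mul_assoc Wᵀ W, hW, Matrix.one_mul, ← Matrix.mul_assoc Qᵀ, hQ, Matrix.one_mul]

lemma sum_sub_mulVec_sq {m k : Type*} [Fintype m] [Fintype k] (y : m → ℝ) (M : Matrix m k ℝ)
    (α : k → ℝ) :
    ∑ i, (y i - (M *ᵥ α) i) ^ 2 = y ⬝ᵥ y - 2 * ((Mᵀ *ᵥ y) ⬝ᵥ α) + α ⬝ᵥ ((Mᵀ * M) *ᵥ α) := by
  rw [mulVec_transpose, ← dotProduct_mulVec, ← mulVec_mulVec, dotProduct_mulVec α,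
    vecMul_transpose]
  simp only [dotProduct, sub_sq, Finset.sum_add_distrib, Finset.sum_sub_distrib, Finset.mul_sum]
  ring_nf

lemma exp_neg_sum_sub_mulVec_sq_div {m k : Type*} [Fintype m] [Fintype k] (y : m → ℝ)
    {M : Matrix m k ℝ} {Q : Matrix k k ℝ} (hQ : Mᵀ * M = Q) {σ : ℝ} (hσ : σ ≠ 0) (α : k → ℝ) :
    exp (-(∑ i, (y i - (M *ᵥ α) i) ^ 2) / (2 * σ ^ 2)) =
      exp (-(y ⬝ᵥ y / (2 * σ ^ 2)) - 1 / 2 * (α ⬝ᵥ (((1 / σ ^ 2) • Q) *ᵥ α))) *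
        exp (((1 / σ ^ 2) • (Mᵀ *ᵥ y)) ⬝ᵥ α) := by
  rw [← exp_add, sum_sub_mulVec_sq, hQ, smul_mulVec, dotProduct_smul, smul_dotProduct,
    smul_eq_mul, smul_eq_mul]
  congr 1
  field_simp
  ring

lemma neg_smul_mulVec_transpose_mulVec_sub {m k : Type*} [Fintype m] [Fintype k]
    {T : Matrix m m ℝ} {Φ : Matrix m k ℝ} {Q : Matrix k k ℝ} (hQ : (T * Φ)ᵀ * (T * Φ) = Q)
    (c : ℝ) (y : m → ℝ) (α : k → ℝ) :
    -(c • Φᵀ *ᵥ (Tᵀ *ᵥ (y - (T * Φ) *ᵥ α))) = (c • Q) *ᵥ α - c • ((T * Φ)ᵀ *ᵥ y) := by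
  rw [mulVec_mulVec, ← transpose_mul, mulVec_sub, mulVec_mulVec, hQ, smul_sub, neg_sub,
    smul_mulVec]

section DotProduct

variable {ι : Type*} [Fintype ι]

noncomputable def dotProductCLM : (ι → ℝ) →L[ℝ] (ι → ℝ) →L[ℝ] ℝ :=
  (dotProductBilin ℝ ℝ).toContinuousBilinearMap

@[simp]
lemma dotProductCLM_apply (v x : ι → ℝ) : dotProductCLM v x = v ⬝ᵥ x := rfl

lemma exp_dotProduct_le {v x : ι → ℝ} {C R : ℝ} (hv : ‖v‖ ≤ C) (hx : ‖x‖ ≤ R) :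
    exp (v ⬝ᵥ x) ≤ exp (‖(dotProductCLM : (ι → ℝ) →L[ℝ] _)‖ * C * R) := by
  have hC : 0 ≤ C := (norm_nonneg _).trans hv
  refine exp_le_exp.2 ((le_abs_self _).trans ?_)
  rw [← dotProductCLM_apply, ← Real.norm_eq_abs]
  refine (dotProductCLM.le_opNorm₂ v x).trans ?_
  gcongr

end DotProduct

namespace MeasureTheory

variable {S E : Type*} [MeasurableSpace S] [NormedAddCommGroup E] {μ : Measure S}

lemma MemLp.ae_norm_le_toReal {f : S → E} (hf : MemLp f ∞ μ) :
    ∀ᵐ s ∂μ, ‖f s‖ ≤ (eLpNorm f ∞ μ).toReal := by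
  filter_upwards [ae_le_eLpNormEssSup (f := f)] with s hs
  rw [← toReal_enorm, eLpNorm_exponent_top]
  exact ENNReal.toReal_mono hf.2.ne hs

lemma _root_.ContinuousOn.memLp_top_restrict [TopologicalSpace S] [OpensMeasurableSpace S]
    [SecondCountableTopologyEither S E]
    {K : Set S} (hK : IsCompact K) (hKm : MeasurableSet K) {f : S → E} (hf : ContinuousOn f K) :
    MemLp f ∞ (μ.restrict K) := by
  obtain ⟨C, hC⟩ := hK.exists_bound_of_continuousOn hf
  exact memLp_top_of_bound (hf.aestronglyMeasurable hKm) C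
    ((ae_restrict_iff' hKm).2 (Filter.Eventually.of_forall hC))

lemma volume_univ_pi_Icc_ne_zero {ι : Type*} [Fintype ι] {a b : ℝ} (hab : a < b) :
    volume (Set.univ.pi fun _ : ι => Set.Icc a b) ≠ 0 := by
  simp [Real.volume_Icc_pi, hab]

end MeasureTheory

section SecondDerivative

variable {𝕜 E F : Type*} [NontriviallyNormedField 𝕜] [NormedAddCommGroup E] [NormedSpace 𝕜 E]
  [NormedAddCommGroup F] [NormedSpace 𝕜 F]

lemma ContDiff.differentiable_fderiv_of_two {f : E → F} (hf : ContDiff 𝕜 2 f) :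
    Differentiable 𝕜 (fderiv 𝕜 f) :=
  (hf.fderiv_right (m := 1) (by norm_num)).differentiable one_ne_zero

lemma fderiv_fderiv_apply_of_hasFDerivAt {f : E → F} (hf : ContDiff 𝕜 2 f) {x w : E}
    {g' : E →L[𝕜] F} (hg : HasFDerivAt (fun y => fderiv 𝕜 f y w) g' x) (v : E) :
    fderiv 𝕜 (fderiv 𝕜 f) x v w = g' v := by
  rw [← hg.fderiv, fderiv_clm_apply (hf.differentiable_fderiv_of_two x) (differentiableAt_const w)]
  simp

lemma fderiv_fderiv_const_add_sub {f g : E → F} (hf : ContDiff 𝕜 2 f) (hg : ContDiff 𝕜 2 g)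
    (c : F) (x : E) :
    fderiv 𝕜 (fderiv 𝕜 fun y => c + f y - g y) x =
      fderiv 𝕜 (fderiv 𝕜 f) x - fderiv 𝕜 (fderiv 𝕜 g) x := by
  have hfd : fderiv 𝕜 (fun y => c + f y - g y) = fun y => fderiv 𝕜 f y - fderiv 𝕜 g y := by
    funext y
    rw [fderiv_fun_sub ((hf.differentiable two_ne_zero y).const_add c)
      (hg.differentiable two_ne_zero y), fderiv_const_add]
  rw [hfd, fderiv_fun_sub (hf.differentiable_fderiv_of_two x) (hg.differentiable_fderiv_of_two x)]

end SecondDerivative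

section Quadratic

variable {ι : Type*} [Fintype ι] {A : Matrix ι ι ℝ}

lemma hasFDerivAt_half_dotProduct_mulVec (hA : Aᵀ = A) (x : ι → ℝ) :
    HasFDerivAt (fun α => (1 / 2 : ℝ) * (α ⬝ᵥ (A *ᵥ α))) (dotProductCLM (A *ᵥ x)) x := by
  have h := (dotProductCLM.hasFDerivAt_of_bilinear (hasFDerivAt_id x)
    (A.mulVecLin.toContinuousLinearMap.hasFDerivAt (x := x))).const_mul (1 / 2 : ℝ)
  refine h.congr_fderiv (ContinuousLinearMap.ext fun v => ?_)
  have hsymm : x ⬝ᵥ (A *ᵥ v) = (A *ᵥ x) ⬝ᵥ v := by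
    rw [dotProduct_mulVec, ← mulVec_transpose, hA]
  simp only [id_eq, ContinuousLinearMap.precompR_apply, ContinuousLinearMap.compL_apply,
    LinearMap.coe_toContinuousLinearMap', mulVecBilin_apply, smul_add, _root_.add_apply,
    _root_.smul_apply, ContinuousLinearMap.comp_apply, dotProductCLM_apply, hsymm, smul_eq_mul,
    ContinuousLinearMap.precompL_apply, ContinuousLinearMap.id_apply, dotProduct_comm v]
  ring

lemma contDiff_half_dotProduct_mulVec {n : WithTop ℕ∞} (A : Matrix ι ι ℝ) :
    ContDiff ℝ n fun α : ι → ℝ => (1 / 2 : ℝ) * (α ⬝ᵥ (A *ᵥ α)) := by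
  simp only [dotProduct, mulVec]
  fun_prop

lemma fderiv_fderiv_half_dotProduct_mulVec [DecidableEq ι] (hA : Aᵀ = A) (α : ι → ℝ) (i j : ι) :
    fderiv ℝ (fderiv ℝ fun α => (1 / 2 : ℝ) * (α ⬝ᵥ (A *ᵥ α))) α (Pi.single i 1)
      (Pi.single j 1) = A i j := by
  have hfd : fderiv ℝ (fun α => (1 / 2 : ℝ) * (α ⬝ᵥ (A *ᵥ α))) =
      dotProductCLM.comp A.mulVecLin.toContinuousLinearMap :=
    funext fun x => (hasFDerivAt_half_dotProduct_mulVec hA x).fderiv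
  rw [hfd, ContinuousLinearMap.fderiv]
  simpa using congrFun (congrFun hA i) j

end Quadratic

section LaplaceIntegral

open Filter

variable {S ι : Type*} [MeasurableSpace S] [Fintype ι] {μ : Measure S} {b : S → ι → ℝ}
  {u : S → ℝ}

noncomputable def laplaceIntegral (μ : Measure S) (b : S → ι → ℝ) (u : S → ℝ) (α : ι → ℝ) : ℝ :=
  ∫ s, exp (b s ⬝ᵥ α) * u s ∂μ

lemma memLp_exp_dotProduct (hb : MemLp b ∞ μ) (α : ι → ℝ) :
    MemLp (fun s => exp (b s ⬝ᵥ α)) ∞ μ := by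
  have hc : Continuous fun v : ι → ℝ => exp (v ⬝ᵥ α) :=
    continuous_exp.comp (dotProductCLM.flip α).continuous
  refine memLp_top_of_bound (hc.comp_aestronglyMeasurable hb.1)
    (exp (‖(dotProductCLM : (ι → ℝ) →L[ℝ] _)‖ * (eLpNorm b ∞ μ).toReal * ‖α‖)) ?_
  filter_upwards [hb.ae_norm_le_toReal] with s hs
  rw [Real.norm_of_nonneg (exp_pos _).le]
  exact exp_dotProduct_le hs le_rfl

variable [IsFiniteMeasure μ]

lemma integrable_exp_dotProduct_mul (hb : MemLp b ∞ μ) (hu : MemLp u ∞ μ) (α : ι → ℝ) :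
    Integrable (fun s => exp (b s ⬝ᵥ α) * u s) μ :=
  (hu.mul (memLp_exp_dotProduct hb α)).integrable le_top

lemma hasFDerivAt_laplaceIntegral (hb : MemLp b ∞ μ) (hu : MemLp u ∞ μ) (α₀ : ι → ℝ) :
    HasFDerivAt (laplaceIntegral μ b u)
      (dotProductCLM fun i => laplaceIntegral μ b (fun s => u s * b s i) α₀) α₀ := by
  set D : (ι → ℝ) →L[ℝ] (ι → ℝ) →L[ℝ] ℝ := dotProductCLM
  set Cb := (eLpNorm b ∞ μ).toReal
  set Cu := (eLpNorm u ∞ μ).toReal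
  have hbound : ∀ᵐ s ∂μ, ∀ α ∈ Metric.ball α₀ 1, ‖(exp (b s ⬝ᵥ α) * u s) • D (b s)‖ ≤
      exp (‖D‖ * Cb * (‖α₀‖ + 1)) * Cu * (‖D‖ * Cb) := by
    filter_upwards [hb.ae_norm_le_toReal, hu.ae_norm_le_toReal] with s hbs hus α hα
    have hα : ‖α‖ ≤ ‖α₀‖ + 1 := by
      linarith [norm_le_norm_add_norm_sub' α α₀, mem_ball_iff_norm.1 hα]
    have hD : ‖D (b s)‖ ≤ ‖D‖ * Cb := (D.le_opNorm _).trans (by gcongr)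
    rw [norm_smul, norm_mul, Real.norm_of_nonneg (exp_pos _).le]
    exact mul_le_mul (mul_le_mul (exp_dotProduct_le hbs hα) hus (norm_nonneg _) (exp_pos _).le)
      hD (norm_nonneg _) (by positivity)
  have hderiv : ∀ s, ∀ α ∈ Metric.ball α₀ 1,
      HasFDerivAt (fun α => exp (b s ⬝ᵥ α) * u s) ((exp (b s ⬝ᵥ α) * u s) • D (b s)) α := by
    intro s α _
    have h := ((D (b s)).hasFDerivAt (x := α)).exp.mul_const (u s)
    rwa [smul_smul, mul_comm (u s)] at h
  have hint : Integrable (fun s => (exp (b s ⬝ᵥ α₀) * u s) • b s) μ :=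
    Integrable.of_eval fun i => by
      simpa [mul_assoc] using integrable_exp_dotProduct_mul hb ((hb.eval i).mul hu) α₀
  have hdiff := hasFDerivAt_integral_of_dominated_of_fderiv_le (Metric.ball_mem_nhds α₀ one_pos)
    (Eventually.of_forall fun α => (integrable_exp_dotProduct_mul hb hu α).aestronglyMeasurable)
    (integrable_exp_dotProduct_mul hb hu α₀)
    ((integrable_exp_dotProduct_mul hb hu α₀).aestronglyMeasurable.smul
      (D.continuous.comp_aestronglyMeasurable hb.1))
    hbound (integrable_const _) (Eventually.of_forall hderiv)
  refine hdiff.congr_fderiv ?_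
  have hsmul : ∀ s, (exp (b s ⬝ᵥ α₀) * u s) • D (b s) = D ((exp (b s ⬝ᵥ α₀) * u s) • b s) :=
    fun s => (map_smul D _ _).symm
  simp_rw [hsmul, D.integral_comp_comm hint]
  congr 1
  ext i
  rw [eval_integral (Integrable.eval hint)]
  simp only [Pi.smul_apply, smul_eq_mul, laplaceIntegral, mul_assoc]

lemma contDiff_laplaceIntegral (hb : MemLp b ∞ μ) (m : ℕ) :
    ∀ {u : S → ℝ}, MemLp u ∞ μ → ContDiff ℝ m (laplaceIntegral μ b u) := by
  induction m with
  | zero =>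
    intro u hu
    exact contDiff_zero.2 (continuous_iff_continuousAt.2 fun α =>
      (hasFDerivAt_laplaceIntegral hb hu α).continuousAt)
  | succ m ih =>
    intro u hu
    rw [Nat.cast_succ, contDiff_succ_iff_hasFDerivAt]
    exact ⟨_, dotProductCLM.contDiff.comp (contDiff_pi.2 fun i =>
      ih (u := fun s => u s * b s i) ((hb.eval i).mul hu)), hasFDerivAt_laplaceIntegral hb hu⟩

lemma laplaceIntegral_pos [NeZero μ] (hb : MemLp b ∞ μ) (hu : MemLp u ∞ μ)
    (hpos : ∀ᵐ s ∂μ, 0 < u s) (α : ι → ℝ) : 0 < laplaceIntegral μ b u α := by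
  have hpos' : ∀ᵐ s ∂μ, 0 < exp (b s ⬝ᵥ α) * u s := hpos.mono fun s hs => mul_pos (exp_pos _) hs
  rw [laplaceIntegral, integral_pos_iff_support_of_nonneg_ae (hpos'.mono fun s hs => hs.le)
    (integrable_exp_dotProduct_mul hb hu α)]
  have hsupp : Function.support (fun s => exp (b s ⬝ᵥ α) * u s) =ᵐ[μ] Set.univ :=
    eventuallyEq_univ.2 (hpos'.mono fun s hs => hs.ne')
  rw [measure_congr hsupp]
  exact Measure.measure_univ_pos.2 (NeZero.ne μ)

lemma fderiv_fderiv_log_laplaceIntegral [DecidableEq ι] (hb : MemLp b ∞ μ) (hu : MemLp u ∞ μ)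
    (hpos : ∀ α, 0 < laplaceIntegral μ b u α) (α : ι → ℝ) (i j : ι) :
    fderiv ℝ (fderiv ℝ fun α => log (laplaceIntegral μ b u α)) α (Pi.single i 1)
        (Pi.single j 1) =
      laplaceIntegral μ b (fun s => u s * (b s i * b s j)) α / laplaceIntegral μ b u α -
        laplaceIntegral μ b (fun s => u s * b s i) α *
          laplaceIntegral μ b (fun s => u s * b s j) α / laplaceIntegral μ b u α ^ 2 := by
  set J := laplaceIntegral μ b u
  have hJ : ∀ α, HasFDerivAt J _ α := hasFDerivAt_laplaceIntegral hb hu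
  have hpartial : ∀ y, fderiv ℝ (fun α => log (J α)) y (Pi.single j 1) =
      laplaceIntegral μ b (fun s => u s * b s j) y * (J y)⁻¹ := by
    intro y
    rw [((hJ y).log (hpos y).ne').fderiv]
    simp [dotProduct_single, mul_comm]
  have hderiv := ((hasFDerivAt_laplaceIntegral (u := fun s => u s * b s j) hb
    ((hb.eval j).mul hu) α).mul ((hasDerivAt_inv (hpos α).ne').comp_hasFDerivAt α (hJ α))
    ).congr_of_eventuallyEq (Eventually.of_forall hpartial)
  rw [fderiv_fderiv_apply_of_hasFDerivAt ((contDiff_laplaceIntegral hb 2 hu).log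
    fun α => (hpos α).ne') hderiv]
  have hswap : (fun s => u s * b s j * b s i) = fun s => u s * (b s i * b s j) := by
    funext s
    ring
  simp only [neg_smul, smul_neg, Function.comp_apply, _root_.add_apply, _root_.neg_apply,
    _root_.smul_apply, dotProductCLM_apply, dotProduct_single, mul_one, smul_eq_mul, hswap]
  field_simp
  ring

end LaplaceIntegral

section NegLogMarginal

variable {S ι : Type*} [MeasurableSpace S] [Fintype ι] {μ : Measure S} {b : S → ι → ℝ}
  {u : S → ℝ}

noncomputable def posterior (μ : Measure S) (b : S → ι → ℝ) (u : S → ℝ) (α : ι → ℝ) (s : S) :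
    ℝ :=
  exp (b s ⬝ᵥ α) * u s / laplaceIntegral μ b u α

lemma integral_posterior_mul (g : S → ℝ) (α : ι → ℝ) :
    ∫ s, posterior μ b u α s * g s ∂μ =
      laplaceIntegral μ b (fun s => u s * g s) α / laplaceIntegral μ b u α := by
  rw [laplaceIntegral, ← integral_div]
  congr 1
  funext s
  rw [posterior]
  ring

lemma integral_mul_const_sub_mul_const_sub {w x y : S → ℝ} (hw : Integrable w μ)
    (hwx : Integrable (fun s => w s * x s) μ) (hwy : Integrable (fun s => w s * y s) μ)
    (hwxy : Integrable (fun s => w s * (x s * y s)) μ) (hw1 : ∫ s, w s ∂μ = 1) (c d : ℝ) :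
    (∫ s, w s * ((c - x s) * (d - y s)) ∂μ) -
        (∫ s, w s * (c - x s) ∂μ) * (∫ s, w s * (d - y s) ∂μ) =
      (∫ s, w s * (x s * y s) ∂μ) - (∫ s, w s * x s ∂μ) * ∫ s, w s * y s ∂μ := by
  have hwz : ∀ (a : ℝ) {z : S → ℝ}, Integrable (fun s => w s * z s) μ →
      Integrable (fun s => w s * (a - z s)) μ := fun a z hz => by
    simpa only [mul_sub] using (hw.mul_const a).sub' hz
  have hlin : ∀ (a : ℝ) {z : S → ℝ}, Integrable (fun s => w s * z s) μ →
      ∫ s, w s * (a - z s) ∂μ = a - ∫ s, w s * z s ∂μ := fun a z hz => by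
    simp only [mul_sub]
    rw [integral_sub (hw.mul_const a) hz, integral_mul_const, hw1, one_mul]
  have hexpand : ∀ s, w s * ((c - x s) * (d - y s)) =
      c * (w s * (d - y s)) - d * (w s * x s) + w s * (x s * y s) := fun s => by ring
  simp only [hexpand]
  rw [integral_add (((hwz d hwy).const_mul c).sub' (hwx.const_mul d)) hwxy,
    integral_sub ((hwz d hwy).const_mul c) (hwx.const_mul d), integral_const_mul,
    integral_const_mul, hlin c hwx, hlin d hwy]
  ring

variable [IsFiniteMeasure μ]

lemma integrable_posterior_mul (hb : MemLp b ∞ μ) (hu : MemLp u ∞ μ) {g : S → ℝ}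
    (hg : MemLp g ∞ μ) (α : ι → ℝ) : Integrable (fun s => posterior μ b u α s * g s) μ := by
  have h : (fun s => posterior μ b u α s * g s) =
      fun s => exp (b s ⬝ᵥ α) * (u s * g s) / laplaceIntegral μ b u α := by
    funext s
    rw [posterior]
    ring
  rw [h]
  exact (integrable_exp_dotProduct_mul (u := fun s => u s * g s) hb (hg.mul hu) α).div_const _

/-- `-log ∫ s, exp (-c - ½ α ⬝ᵥ A *ᵥ α + b s ⬝ᵥ α) * u s ∂μ`, with the factor not depending on `s`
taken out of the integral. -/
noncomputable def negLogMarginal (μ : Measure S) (b : S → ι → ℝ) (u : S → ℝ)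
    (A : Matrix ι ι ℝ) (c : ℝ) (α : ι → ℝ) : ℝ :=
  c + (1 / 2 : ℝ) * (α ⬝ᵥ (A *ᵥ α)) - log (laplaceIntegral μ b u α)

variable [NeZero μ] {A : Matrix ι ι ℝ} {c : ℝ}

lemma contDiff_negLogMarginal (hb : MemLp b ∞ μ) (hu : MemLp u ∞ μ) (hpos : ∀ᵐ s ∂μ, 0 < u s) :
    ContDiff ℝ 2 (negLogMarginal μ b u A c) :=
  (contDiff_const.add (contDiff_half_dotProduct_mulVec A)).sub
    ((contDiff_laplaceIntegral hb 2 hu).log fun α => (laplaceIntegral_pos hb hu hpos α).ne')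

theorem fderiv_fderiv_negLogMarginal_apply [DecidableEq ι] (hA : Aᵀ = A) (hb : MemLp b ∞ μ)
    (hu : MemLp u ∞ μ) (hpos : ∀ᵐ s ∂μ, 0 < u s) (α : ι → ℝ) (i j : ι) :
    fderiv ℝ (fderiv ℝ (negLogMarginal μ b u A c)) α (Pi.single i 1) (Pi.single j 1) =
      A i j - ((∫ s, posterior μ b u α s * ((A *ᵥ α - b s) i * (A *ᵥ α - b s) j) ∂μ) -
        (∫ s, posterior μ b u α s * (A *ᵥ α - b s) i ∂μ) *
          ∫ s, posterior μ b u α s * (A *ᵥ α - b s) j ∂μ) := by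
  have hJ := laplaceIntegral_pos hb hu hpos
  have hint : ∀ {g : S → ℝ}, MemLp g ∞ μ → Integrable (fun s => posterior μ b u α s * g s) μ :=
    fun hg => integrable_posterior_mul hb hu hg α
  have hmass : ∫ s, posterior μ b u α s ∂μ = 1 := by
    simpa [div_self (hJ α).ne'] using integral_posterior_mul (μ := μ) (b := b) (u := u) 1 α
  simp only [Pi.sub_apply]
  rw [integral_mul_const_sub_mul_const_sub (by simpa using hint (memLp_const (1 : ℝ)))
    (hint (hb.eval i)) (hint (hb.eval j)) (hint ((hb.eval j).mul (hb.eval i))) hmass,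
    show negLogMarginal μ b u A c = fun α => c + (1 / 2 : ℝ) * (α ⬝ᵥ (A *ᵥ α)) -
      log (laplaceIntegral μ b u α) from rfl,
    fderiv_fderiv_const_add_sub (contDiff_half_dotProduct_mulVec A)
      ((contDiff_laplaceIntegral hb 2 hu).log fun α => (hJ α).ne'),
    _root_.sub_apply, _root_.sub_apply,
    fderiv_fderiv_half_dotProduct_mulVec hA, fderiv_fderiv_log_laplaceIntegral hb hu hJ,
    integral_posterior_mul, integral_posterior_mul, integral_posterior_mul]
  ring

end NegLogMarginal

theorem stmt_15_general (n D L K : ℕ)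
    (ω : Fin L → Fin n → ℝ) (σ : ℝ) (hσ : 0 < σ)
    (W : Matrix (Fin D) (Fin L × Fin 2) ℝ) (hW : Wᵀ * W = 1)
    (Φ : Matrix (Fin D) (Fin K) ℝ) (I : Fin D → ℝ)
    (T : (Fin n → ℝ) → Matrix (Fin D) (Fin D) ℝ)
    (hT : ∀ s, T s = W * blockRot ω s * Wᵀ)
    (Kset : Set (Fin n → ℝ))
    (hKset : Kset = Set.univ.pi fun _ : Fin n => Set.Icc (0 : ℝ) (2 * Real.pi))
    (prior : (Fin n → ℝ) → ℝ)
    (hprior_cont : ContinuousOn prior Kset)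
    (hprior_pos : ∀ s ∈ Kset, 0 < prior s)
    (Z : (Fin K → ℝ) → ℝ)
    (hZ : Z = fun α => ∫ s in Kset,
      Real.exp (-(∑ i, (I i - (T s * Φ).mulVec α i) ^ 2) / (2 * σ ^ 2)) * prior s)
    (f : (Fin K → ℝ) → ℝ)
    (hf : f = fun α => -Real.log (Z α))
    (h : (Fin n → ℝ) → (Fin K → ℝ) → Fin K → ℝ)
    (hh : ∀ s α, h s α =
      -((1 / σ ^ 2) • Φᵀ.mulVec ((T s)ᵀ.mulVec (I - (T s * Φ).mulVec α))))
    (p : (Fin K → ℝ) → (Fin n → ℝ) → ℝ)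
    (hp : ∀ α s, p α s =
      Real.exp (-(∑ i, (I i - (T s * Φ).mulVec α i) ^ 2) / (2 * σ ^ 2)) * prior s / Z α) :
    ContDiff ℝ 2 f ∧
      ∀ (α : Fin K → ℝ) (i j : Fin K),
        fderiv ℝ (fderiv ℝ f) α (Pi.single i 1 : Fin K → ℝ) (Pi.single j 1 : Fin K → ℝ) =
          (((1 / σ ^ 2) • (Φᵀ * W * Wᵀ * Φ) : Matrix (Fin K) (Fin K) ℝ) i j) -
            ((∫ s in Kset, p α s * (h s α i * h s α j)) -
              (∫ s in Kset, p α s * h s α i) * (∫ s in Kset, p α s * h s α j)) := by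
  set μ := volume.restrict Kset
  set A : Matrix (Fin K) (Fin K) ℝ := (1 / σ ^ 2) • (Φᵀ * W * Wᵀ * Φ)
  set b : (Fin n → ℝ) → Fin K → ℝ := fun s => (1 / σ ^ 2) • ((T s * Φ)ᵀ *ᵥ I)
  set c₀ := I ⬝ᵥ I / (2 * σ ^ 2)
  have hKcomp : IsCompact Kset := hKset ▸ isCompact_univ_pi fun _ => isCompact_Icc
  have hKmeas : MeasurableSet Kset := hKset ▸ MeasurableSet.univ_pi fun _ => measurableSet_Icc
  have : IsFiniteMeasure μ := isFiniteMeasure_restrict.2 hKcomp.measure_lt_top.ne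
  have : NeZero μ := ⟨Measure.restrict_eq_zero.not.2
    (hKset ▸ volume_univ_pi_Icc_ne_zero (by positivity))⟩
  have hGram : ∀ s, (T s * Φ)ᵀ * (T s * Φ) = Φᵀ * W * Wᵀ * Φ := fun s => by
    rw [transpose_mul, Matrix.mul_assoc, ← Matrix.mul_assoc (T s)ᵀ, hT,
      transpose_mul_self_mul_mul_transpose hW (blockRot_transpose_mul_self ω s)]
    simp only [Matrix.mul_assoc]
  have hlik : ∀ α s, exp (-(∑ i, (I i - (T s * Φ).mulVec α i) ^ 2) / (2 * σ ^ 2)) =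
      exp (-c₀ - 1 / 2 * (α ⬝ᵥ (A *ᵥ α))) * exp (b s ⬝ᵥ α) :=
    fun α s => exp_neg_sum_sub_mulVec_sq_div I (hGram s) hσ.ne' α
  have hZ' : ∀ α, Z α = exp (-c₀ - 1 / 2 * (α ⬝ᵥ (A *ᵥ α))) * laplaceIntegral μ b prior α :=
    fun α => by simp only [hZ, hlik, mul_assoc, integral_const_mul, laplaceIntegral]
  have hTc : Continuous T := funext hT ▸
    (continuous_const.matrix_mul (continuous_blockRot ω)).matrix_mul continuous_const
  have hb : MemLp b ∞ μ := (((hTc.matrix_mul continuous_const).matrix_transpose.matrix_mulVec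
    continuous_const).fun_const_smul _).continuousOn.memLp_top_restrict hKcomp hKmeas
  have hu : MemLp prior ∞ μ := hprior_cont.memLp_top_restrict hKcomp hKmeas
  have hupos : ∀ᵐ s ∂μ, 0 < prior s :=
    (ae_restrict_iff' hKmeas).2 (Filter.Eventually.of_forall hprior_pos)
  have hf' : f = negLogMarginal μ b prior A c₀ := by
    funext α
    simp only [hf, hZ']
    rw [log_mul (exp_ne_zero _) (laplaceIntegral_pos hb hu hupos α).ne', log_exp, negLogMarginal]
    ring
  have hp' : p = posterior μ b prior := by
    funext α s
    rw [hp, hlik, hZ', posterior, mul_assoc, mul_div_mul_left _ _ (exp_ne_zero _)]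
  have hh' : h = fun s α => A *ᵥ α - b s :=
    funext fun s => funext fun α =>
      (hh s α).trans (neg_smul_mulVec_transpose_mulVec_sub (hGram s) _ I α)
  subst hf' hp' hh'
  exact ⟨contDiff_negLogMarginal hb hu hupos,
    fderiv_fderiv_negLogMarginal_apply (by simp [A, transpose_smul, Matrix.mul_assoc]) hb hu hupos⟩

theorem stmt_15 (n D L K : ℕ) (hn : 0 < n) (hD : 0 < D) (hL : 0 < L) (hK : 0 < K)
    (hDL : 2 * L ≤ D)
    (ω : Fin L → Fin n → ℝ) (σ : ℝ) (hσ : 0 < σ)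
    (W : Matrix (Fin D) (Fin L × Fin 2) ℝ) (hW : Wᵀ * W = 1)
    (Φ : Matrix (Fin D) (Fin K) ℝ) (I : Fin D → ℝ)
    (T : (Fin n → ℝ) → Matrix (Fin D) (Fin D) ℝ)
    (hT : ∀ s, T s = W * blockRot ω s * Wᵀ)
    (Kset : Set (Fin n → ℝ))
    (hKset : Kset = Set.univ.pi fun _ : Fin n => Set.Icc (0 : ℝ) (2 * Real.pi))
    (prior : (Fin n → ℝ) → ℝ)
    (hprior_cont : ContinuousOn prior Kset)
    (hprior_pos : ∀ s ∈ Kset, 0 < prior s)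
    (Z : (Fin K → ℝ) → ℝ)
    (hZ : Z = fun α => ∫ s in Kset,
      Real.exp (-(∑ i, (I i - (T s * Φ).mulVec α i) ^ 2) / (2 * σ ^ 2)) * prior s)
    (f : (Fin K → ℝ) → ℝ)
    (hf : f = fun α => -Real.log (Z α))
    (h : (Fin n → ℝ) → (Fin K → ℝ) → Fin K → ℝ)
    (hh : ∀ s α, h s α =
      -((1 / σ ^ 2) • Φᵀ.mulVec ((T s)ᵀ.mulVec (I - (T s * Φ).mulVec α))))
    (p : (Fin K → ℝ) → (Fin n → ℝ) → ℝ)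
    (hp : ∀ α s, p α s =
      Real.exp (-(∑ i, (I i - (T s * Φ).mulVec α i) ^ 2) / (2 * σ ^ 2)) * prior s / Z α) :
    ContDiff ℝ 2 f ∧
      ∀ (α : Fin K → ℝ) (i j : Fin K),
        fderiv ℝ (fderiv ℝ f) α (Pi.single i 1 : Fin K → ℝ) (Pi.single j 1 : Fin K → ℝ) =
          (((1 / σ ^ 2) • (Φᵀ * W * Wᵀ * Φ) : Matrix (Fin K) (Fin K) ℝ) i j) -
            ((∫ s in Kset, p α s * (h s α i * h s α j)) -
              (∫ s in Kset, p α s * h s α i) * (∫ s in Kset, p α s * h s α j)) :=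
  stmt_15_general n D L K ω σ hσ W hW Φ I T hT Kset hKset prior hprior_cont hprior_pos Z hZ f hf h
    hh p hp
end
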